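/- arXiv:1709.04501 — 2 statements merged into one kernel-verified Lean document; each statement's English description precedes it below -/
import Mathlib

section
/- Let A ⊆ 𝕋 be a union of at most m intervals with μ(A) > 0, and suppose the integer n satisfies D_n(A) < min(1/2, μ(A)/(1 − 2/π)). Then |n| ≤ m / (2(μ(A) − (1 − 2/π) D_n(A))). -/
open Pointwise MeasureTheory

/-- A closed interval in `𝕋 = ℝ/ℤ`: the image of a closed interval of `ℝ`
under reduction modulo 1. -/
def IsClosedIntervalT (I : Set UnitAddCircle) : Prop :=
  ∃ a b : ℝ, I = (fun x : ℝ => (x : UnitAddCircle)) '' Set.Icc a b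

/-- An interval in `𝕋 = ℝ/ℤ`: the image of an interval (an order-connected set)
of `ℝ` under reduction modulo 1. -/
def IsIntervalT (I : Set UnitAddCircle) : Prop :=
  ∃ J : Set ℝ, J.OrdConnected ∧ I = (fun x : ℝ => (x : UnitAddCircle)) '' J

/-- The `n`-diameter of `A ⊆ 𝕋`: the infimum of `μ(I)` over closed intervals
`I ⊆ 𝕋` such that `n • A ⊆ I`. -/
noncomputable def nDiam (n : ℤ) (A : Set UnitAddCircle) : ℝ :=
  sInf {x : ℝ | ∃ I : Set UnitAddCircle,
    IsClosedIntervalT I ∧ n • A ⊆ I ∧ x = (volume I).toReal}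


/-!
An interval `J` whose dilate `n • J` fits in an arc `I` with `μ(I) < 1` satisfies
`|n| μ(J) ≤ μ(I)`: the projection to `𝕋` of the real segment `[n x, n y]` (for `x, y ∈ J`) lies
in `I`, so it cannot wrap around the circle and its length `|n| |x - y|` is at most `μ(I)`.
Summing over the `m` intervals and choosing an arc with `μ(I) < 1/2` gives
`2 |n| μ(A) ≤ m`, which is stronger than the claim since `D_n(A) ≥ 0`.
-/

open Set

-- For sets, `n • s` is the `n`-fold sumset, which contains the dilate of `s` by `n`.
theorem Set.zsmul_mem_zsmul {α : Type*} [AddGroup α] {s : Set α} {a : α} (ha : a ∈ s) (n : ℤ) :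
    n • a ∈ n • s := by
  obtain ⟨k, rfl | rfl⟩ := Int.eq_nat_or_neg n
  · simpa only [natCast_zsmul] using Set.nsmul_mem_nsmul ha
  · simpa only [neg_zsmul, natCast_zsmul, Set.neg_mem_neg] using Set.nsmul_mem_nsmul ha

namespace UnitAddCircle

local notation "π₁" => ((↑) : ℝ → UnitAddCircle)

-- `Icc c d` lies in the fundamental domain `Ioc (d - 1) d`, on which the projection is injective.
theorem volume_coe_image_Icc {c d : ℝ} (h : d - c < 1) :
    volume (π₁ '' Icc c d) = ENNReal.ofReal (d - c) := by
  have hmeas : MeasurableSet (π₁ '' Icc c d) :=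
    (isCompact_Icc.image (AddCircle.continuous_mk' 1)).measurableSet
  have hpre : QuotientAddGroup.mk ⁻¹' (π₁ '' Icc c d) ∩ Ioc (d - 1) (d - 1 + 1) = Icc c d := by
    ext y
    constructor
    · rintro ⟨⟨x, hx, hxy⟩, hy⟩
      have hx' : x ∈ Ioc (d - 1) (d - 1 + 1) := ⟨by linarith [hx.1], by linarith [hx.2]⟩
      rwa [← (AddCircle.coe_eq_coe_iff_of_mem_Ioc hx' hy).1 hxy]
    · intro hy
      exact ⟨⟨y, hy, rfl⟩, by linarith [hy.1], by linarith [hy.2]⟩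
  rw [AddCircle.add_projection_respects_measure 1 (d - 1) hmeas, hpre, Real.volume_Icc]

theorem sub_le_volume_of_coe_image_Icc_subset {c d : ℝ} {I : Set UnitAddCircle}
    (hI : volume I < 1) (h : π₁ '' Icc c d ⊆ I) : d - c ≤ (volume I).toReal := by
  rcases lt_or_ge (d - c) 1 with hlt | hge
  · have := measure_mono (μ := volume) h
    rw [volume_coe_image_Icc hlt] at this
    exact (ENNReal.ofReal_le_iff_le_toReal (measure_ne_top _ _)).1 this
  · have huniv : univ ⊆ I := by
      rw [← AddCircle.coe_image_Icc_eq 1 c]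
      exact (image_mono (Icc_subset_Icc_right (by linarith))).trans h
    have := measure_mono (μ := volume) huniv
    rw [UnitAddCircle.measure_univ] at this
    exact absurd hI this.not_gt

theorem volume_coe_image_le_ediam (s : Set ℝ) : volume (π₁ '' s) ≤ Metric.ediam s := by
  by_cases hs : Bornology.IsBounded s
  · rw [Real.ediam_eq hs]
    rcases lt_or_ge (sSup s - sInf s) 1 with hlt | hge
    · rw [← volume_coe_image_Icc hlt]
      exact measure_mono (image_mono hs.subset_Icc_sInf_sSup)
    · calc volume (π₁ '' s) ≤ volume univ := measure_mono (subset_univ _)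
        _ = 1 := UnitAddCircle.measure_univ
        _ ≤ ENNReal.ofReal (sSup s - sInf s) := by rwa [ENNReal.one_le_ofReal]
  · rw [Metric.ediam_of_unbounded hs]
    exact le_top

theorem ofReal_abs_mul_volume_coe_image_le {J : Set ℝ} (hJ : J.OrdConnected) {r : ℝ}
    {I : Set UnitAddCircle} (hI : volume I < 1) (hJI : ∀ x ∈ J, π₁ (r * x) ∈ I) :
    ENNReal.ofReal |r| * volume (π₁ '' J) ≤ volume I := by
  rcases eq_or_ne r 0 with rfl | hr
  · simp
  have hr' : 0 < |r| := abs_pos.2 hr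
  set L := (volume I).toReal
  have hdist : ∀ x ∈ J, ∀ y ∈ J, |r| * dist x y ≤ L := by
    intro x hx y hy
    have hsub : π₁ '' uIcc (r * x) (r * y) ⊆ I := by
      rintro _ ⟨z, hz, rfl⟩
      rw [← image_const_mul_uIcc] at hz
      obtain ⟨w, hw, rfl⟩ := hz
      exact hJI w (hJ.uIcc_subset hx hy hw)
    have := sub_le_volume_of_coe_image_Icc_subset hI hsub
    rwa [max_sub_min_eq_abs, ← mul_sub, abs_mul, ← Real.dist_eq, dist_comm] at this
  have hdiam : Metric.ediam J ≤ ENNReal.ofReal (L / |r|) :=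
    Metric.ediam_le_of_forall_dist_le fun x hx y hy => by
      rw [le_div_iff₀' hr']
      exact hdist x hx y hy
  calc ENNReal.ofReal |r| * volume (π₁ '' J)
      ≤ ENNReal.ofReal |r| * ENNReal.ofReal (L / |r|) := by
        gcongr
        exact (volume_coe_image_le_ediam J).trans hdiam
    _ = volume I := by
        rw [← ENNReal.ofReal_mul hr'.le, mul_div_cancel₀ _ hr'.ne', ENNReal.ofReal_toReal
          (measure_ne_top _ _)]

end UnitAddCircle

theorem IsIntervalT.ofReal_abs_mul_volume_le {S I : Set UnitAddCircle} (hS : IsIntervalT S)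
    (hI : volume I < 1) {n : ℤ} (hSI : ∀ z ∈ S, n • z ∈ I) :
    ENNReal.ofReal |(n : ℝ)| * volume S ≤ volume I := by
  obtain ⟨J, hJ, rfl⟩ := hS
  refine UnitAddCircle.ofReal_abs_mul_volume_coe_image_le hJ hI fun x hx => ?_
  rw [← zsmul_eq_mul, AddCircle.coe_zsmul]
  exact hSI _ (mem_image_of_mem _ hx)

theorem abs_mul_volume_iUnion_le {ι : Type*} [Fintype ι] {f : ι → Set UnitAddCircle}
    (hf : ∀ i, IsIntervalT (f i)) {I : Set UnitAddCircle} (hI : volume I < 1) {n : ℤ}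
    (hfI : ∀ z ∈ ⋃ i, f i, n • z ∈ I) :
    |(n : ℝ)| * (volume (⋃ i, f i)).toReal ≤ Fintype.card ι * (volume I).toReal := by
  have key : ENNReal.ofReal |(n : ℝ)| * volume (⋃ i, f i) ≤ Fintype.card ι * volume I :=
    calc ENNReal.ofReal |(n : ℝ)| * volume (⋃ i, f i)
        ≤ ENNReal.ofReal |(n : ℝ)| * ∑ i, volume (f i) := by
          gcongr
          exact measure_iUnion_fintype_le _ _
      _ = ∑ i, ENNReal.ofReal |(n : ℝ)| * volume (f i) := Finset.mul_sum _ _ _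
      _ ≤ ∑ _i : ι, volume I := Finset.sum_le_sum fun i _ =>
          (hf i).ofReal_abs_mul_volume_le hI fun z hz => hfI z (mem_iUnion_of_mem i hz)
      _ = Fintype.card ι * volume I := by
          rw [Finset.sum_const, Finset.card_univ, nsmul_eq_mul]
  have := ENNReal.toReal_mono (by finiteness) key
  rwa [ENNReal.toReal_mul, ENNReal.toReal_mul, ENNReal.toReal_ofReal (abs_nonneg _),
    ENNReal.toReal_natCast] at this

theorem nDiam_nonneg (n : ℤ) (A : Set UnitAddCircle) : 0 ≤ nDiam n A :=
  Real.sInf_nonneg fun _ ⟨_, _, _, hx⟩ => hx ▸ ENNReal.toReal_nonneg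

theorem exists_isClosedIntervalT_of_nDiam_lt {n : ℤ} {A : Set UnitAddCircle} {x : ℝ}
    (h : nDiam n A < x) :
    ∃ I, IsClosedIntervalT I ∧ n • A ⊆ I ∧ (volume I).toReal < x := by
  have huniv : IsClosedIntervalT univ := ⟨0, 0 + 1, (AddCircle.coe_image_Icc_eq 1 0).symm⟩
  obtain ⟨_, ⟨I, hI, hAI, rfl⟩, hlt⟩ :=
    exists_lt_of_csInf_lt (by exact ⟨_, univ, huniv, subset_univ _, rfl⟩) h
  exact ⟨I, hI, hAI, hlt⟩

theorem stmt_6_general (m : ℕ) (A : Set UnitAddCircle)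
    (f : Fin m → Set UnitAddCircle) (hf : ∀ i, IsIntervalT (f i))
    (hA : A = ⋃ i, f i)
    (n : ℤ)
    (hD : nDiam n A < min (1 / 2) ((volume A).toReal / (1 - 2 / Real.pi))) :
    |(n : ℝ)| ≤ m / (2 * ((volume A).toReal - (1 - 2 / Real.pi) * nDiam n A)) := by
  have hc : 0 < 1 - 2 / Real.pi := by
    rw [sub_pos, div_lt_one Real.pi_pos]
    linarith [Real.pi_gt_three]
  have hcD : (1 - 2 / Real.pi) * nDiam n A < (volume A).toReal :=
    (lt_div_iff₀' hc).1 (hD.trans_le (min_le_right _ _))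
  obtain ⟨I, -, hAI, hI⟩ := exists_isClosedIntervalT_of_nDiam_lt (hD.trans_le (min_le_left _ _))
  have hI1 : volume I < 1 := by
    rw [← ENNReal.ofReal_toReal (measure_ne_top volume I), ENNReal.ofReal_lt_one]
    linarith
  subst hA
  have hμ := abs_mul_volume_iUnion_le hf hI1 fun z hz => hAI (zsmul_mem_zsmul hz n)
  rw [Fintype.card_fin] at hμ
  rw [le_div_iff₀ (by linarith)]
  nlinarith [mul_nonneg (abs_nonneg (n : ℝ)) (mul_nonneg hc.le (nDiam_nonneg n (⋃ i, f i)))]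

theorem stmt_6 (m : ℕ) (A : Set UnitAddCircle)
    (f : Fin m → Set UnitAddCircle) (hf : ∀ i, IsIntervalT (f i))
    (hA : A = ⋃ i, f i) (hA0 : 0 < (volume A).toReal)
    (n : ℤ)
    (hD : nDiam n A < min (1 / 2) ((volume A).toReal / (1 - 2 / Real.pi))) :
    |(n : ℝ)| ≤ m / (2 * ((volume A).toReal - (1 - 2 / Real.pi) * nDiam n A)) :=
  stmt_6_general m A f hf hA n hD
end

section
/- Let p be a prime and let B ⊆ ℤ/pℤ be a union of at most m intervals with |B|/p = β > 0. Suppose n ∈ ℤ/pℤ satisfies D_n(B) < min(1/2, β/(1 − 2/π)). Then |n|_p ≤ m / (2(β − (1 − 2/π) D_n(B))). -/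
open Pointwise

/-- An interval in `ℤ/pℤ`: an arithmetic progression of common difference 1. -/
def IsIntervalZMod {p : ℕ} (I : Finset (ZMod p)) : Prop :=
  ∃ (a : ZMod p) (l : ℕ), I = (Finset.range l).image fun k : ℕ => a + (k : ZMod p)

/-- The `n`-diameter of `B ⊆ ℤ/pℤ`: the infimum of `|I|/p` over intervals
`I ⊆ ℤ/pℤ` such that `n • B ⊆ I`. -/
noncomputable def nDiamZMod {p : ℕ} (n : ZMod p) (B : Finset (ZMod p)) : ℝ :=
  sInf {x : ℝ | ∃ I : Finset (ZMod p),
    IsIntervalZMod I ∧ n • B ⊆ I ∧ x = (I.card : ℝ) / p}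

/-!
Let `I = a + [0, L)` be an interval of length `L = D_n(B) p` containing `n • B`, and give the
point `a + j` of `I` the weight `cos ((2j - L + 1) π / p)`. This is the real part of a unimodular
multiple of `e(a + j) = exp (2πi (a + j) / p)`. The weights are nonnegative on `I` (as `2L ≤ p`) and
add up to `sin (Lπ/p) / sin (π/p) ≥ 2L/π`, so the `|B|` points of `n • B` carry weight at least
`|B| - (1 - 2/π) L`. Splitting `B` into its `m` intervals `J`, the same total weight is at most
`∑_J |∑_{x ∈ J} e(nx)|`, and each of these geometric sums is at most `1 / |sin (π |n|_p / p)|`,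
hence at most `p / (2 |n|_p)`.
-/

open Finset Real ZMod

theorem sum_biUnion_le_sum_sum {ι α M : Type*} [DecidableEq α] [AddCommMonoid M] [PartialOrder M]
    [IsOrderedAddMonoid M] (s : Finset ι) (t : ι → Finset α) {g : α → M}
    (hg : ∀ x ∈ s.biUnion t, 0 ≤ g x) :
    ∑ x ∈ s.biUnion t, g x ≤ ∑ i ∈ s, ∑ x ∈ t i, g x := by
  classical
  induction s using Finset.induction_on with
  | empty => simp
  | insert i s hi ih =>
    rw [biUnion_insert] at hg ⊢
    calc ∑ x ∈ t i ∪ s.biUnion t, g x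
        ≤ ∑ x ∈ t i ∪ s.biUnion t, g x + ∑ x ∈ t i ∩ s.biUnion t, g x :=
          le_add_of_nonneg_right <| sum_nonneg fun x hx =>
            hg x (mem_union_left _ (mem_inter.1 hx).1)
      _ = ∑ x ∈ t i, g x + ∑ x ∈ s.biUnion t, g x := sum_union_inter
      _ ≤ ∑ x ∈ t i, g x + ∑ j ∈ s, ∑ x ∈ t j, g x :=
          add_le_add_right (ih fun x hx => hg x (mem_union_right _ hx)) _
      _ = ∑ j ∈ insert i s, ∑ x ∈ t j, g x := by rw [sum_insert hi]

theorem sum_range_cos_mul_sin (θ : ℝ) (L : ℕ) :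
    (∑ j ∈ range L, cos ((2 * j - L + 1) * θ)) * sin θ = sin (L * θ) := by
  have step (j : ℕ) : cos ((2 * j - L + 1) * θ) * sin θ
      = (sin ((2 * (j + 1 : ℕ) - L) * θ) - sin ((2 * j - L) * θ)) / 2 := by
    push_cast
    rw [show (2 * ((j : ℝ) + 1) - L) * θ = (2 * j - L + 1) * θ + θ by ring,
      show (2 * (j : ℝ) - L) * θ = (2 * j - L + 1) * θ - θ by ring, sin_add, sin_sub]
    ring
  rw [sum_mul, sum_congr rfl fun j _ => step j, ← sum_div,
    sum_range_sub (fun j : ℕ => sin ((2 * j - L) * θ))]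
  push_cast
  rw [show (2 * (L : ℝ) - L) * θ = L * θ by ring, show (2 * (0 : ℝ) - L) * θ = -(L * θ) by ring,
    sin_neg]
  ring

theorem cos_two_mul_sub_add_one_mul_nonneg {θ : ℝ} {L j : ℕ} (hθ : 0 ≤ θ)
    (hLθ : L * θ ≤ π / 2) (hj : j < L) :
    0 ≤ cos ((2 * j - L + 1) * θ) := by
  have hj' : (j : ℝ) + 1 ≤ L := by exact_mod_cast hj
  apply cos_nonneg_of_mem_Icc
  constructor <;> nlinarith [(j.cast_nonneg : (0 : ℝ) ≤ j)]

theorem two_div_pi_mul_le_sum_range_cos {θ : ℝ} {L : ℕ} (hθ : 0 < θ)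
    (hLθ : L * θ ≤ π / 2) :
    2 / π * L ≤ ∑ j ∈ range L, cos ((2 * j - L + 1) * θ) := by
  rcases L.eq_zero_or_pos with rfl | hL
  · simp
  have hL1 : (1 : ℝ) ≤ L := by exact_mod_cast hL
  have hsinθ : 0 < sin θ := sin_pos_of_pos_of_lt_pi hθ (by nlinarith [pi_pos])
  refine le_of_mul_le_mul_right ?_ hsinθ
  calc 2 / π * L * sin θ ≤ 2 / π * (L * θ) := by
        rw [mul_assoc]; gcongr; exact sin_le hθ.le
    _ ≤ sin (L * θ) := mul_le_sin (by positivity) hLθ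
    _ = _ := (sum_range_cos_mul_sin θ L).symm

theorem card_sub_le_sum_cos {θ : ℝ} {L : ℕ} (hθ : 0 < θ) (hLθ : L * θ ≤ π / 2)
    {T : Finset ℕ} (hT : T ⊆ range L) :
    #T - (1 - 2 / π) * L ≤ ∑ j ∈ T, cos ((2 * j - L + 1) * θ) := by
  have hrest : ∑ j ∈ range L \ T, cos ((2 * j - L + 1) * θ) ≤ #(range L \ T) :=
    (sum_le_sum fun j _ => cos_le_one _).trans_eq (by simp)
  have hsplit := sum_sdiff hT (f := fun j : ℕ => cos ((2 * j - L + 1) * θ))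
  have hcard := card_sdiff_add_card_eq_card hT
  rw [card_range] at hcard
  have := two_div_pi_mul_le_sum_range_cos hθ hLθ
  have hc : (#(range L \ T) : ℝ) + #T = L := by exact_mod_cast hcard
  linarith

variable {N : ℕ}

theorem natAbs_valMinAbs_pos {n : ZMod N} (hn : n ≠ 0) : 0 < n.valMinAbs.natAbs := by
  rwa [Int.natAbs_pos, Ne, valMinAbs_eq_zero]

theorem norm_stdAddChar [NeZero N] (x : ZMod N) : ‖stdAddChar x‖ = 1 :=
  Circle.norm_coe _

theorem stdAddChar_ne_one [NeZero N] {n : ZMod N} (hn : n ≠ 0) : stdAddChar n ≠ 1 := by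
  rwa [← (stdAddChar (N := N)).map_zero_eq_one, injective_stdAddChar.ne_iff]

theorem four_mul_natAbs_valMinAbs_div_le_norm_stdAddChar_sub_one [NeZero N] (n : ZMod N) :
    4 * n.valMinAbs.natAbs / N ≤ ‖stdAddChar n - 1‖ := by
  have hN : (0 : ℝ) < N := by exact_mod_cast NeZero.pos N
  have hv : 2 * |(n.valMinAbs : ℝ)| ≤ N := by
    have := n.natAbs_valMinAbs_le
    rw [← Int.cast_abs, ← Int.natCast_natAbs]
    exact_mod_cast (by omega : 2 * n.valMinAbs.natAbs ≤ N)
  have hangle : |π * n.valMinAbs / N| ≤ π / 2 := by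
    rw [abs_div, abs_mul, abs_of_pos pi_pos, abs_of_pos hN, div_le_div_iff₀ hN two_pos]
    nlinarith [pi_pos]
  conv_rhs => rw [← n.coe_valMinAbs]
  rw [stdAddChar_coe,
    show 2 * π * Complex.I * n.valMinAbs / N
        = Complex.I * ((2 * π * n.valMinAbs / N : ℝ) : ℂ) by
      push_cast; ring,
    Complex.norm_exp_I_mul_ofReal_sub_one, norm_mul, Real.norm_two, norm_eq_abs,
    show 2 * π * n.valMinAbs / N / 2 = π * n.valMinAbs / N by ring]
  calc (4 * n.valMinAbs.natAbs / N : ℝ) = 2 * (2 / π * |π * n.valMinAbs / N|) := by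
        rw [abs_div, abs_mul, abs_of_pos pi_pos, abs_of_pos hN, Nat.cast_natAbs, Int.cast_abs]
        field_simp
        ring
    _ ≤ 2 * |sin (π * n.valMinAbs / N)| := by gcongr; exact mul_abs_le_abs_sin hangle

theorem norm_sum_range_stdAddChar_pow_le [NeZero N] {n : ZMod N} (hn : n ≠ 0) (l : ℕ) :
    ‖∑ j ∈ range l, stdAddChar n ^ j‖ ≤ N / (2 * n.valMinAbs.natAbs) := by
  have hq : (0 : ℝ) < n.valMinAbs.natAbs := by exact_mod_cast natAbs_valMinAbs_pos hn
  have hN : (0 : ℝ) < N := by exact_mod_cast NeZero.pos N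
  have hden := four_mul_natAbs_valMinAbs_div_le_norm_stdAddChar_sub_one n
  have hnum : ‖stdAddChar n ^ l - 1‖ ≤ 2 :=
    (norm_sub_le _ _).trans_eq (by rw [norm_pow, norm_stdAddChar]; norm_num)
  rw [geom_sum_eq (stdAddChar_ne_one hn), norm_div]
  calc ‖stdAddChar n ^ l - 1‖ / ‖stdAddChar n - 1‖
      ≤ 2 / (4 * n.valMinAbs.natAbs / N) := div_le_div₀ zero_le_two hnum (by positivity) hden
    _ = N / (2 * n.valMinAbs.natAbs) := by field_simp; ring

theorem re_exp_mul_stdAddChar [NeZero N] (L : ℕ) (y : ZMod N) :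
    (Complex.exp (((-((L - 1) * (π / N)) : ℝ) : ℂ) * Complex.I) * stdAddChar y).re
      = cos ((2 * y.val - L + 1) * (π / N)) := by
  rw [stdAddChar_apply, toCircle_apply, ← Complex.exp_add,
    show ((-((L - 1) * (π / N)) : ℝ) : ℂ) * Complex.I + 2 * π * Complex.I * y.val / N
      = (((2 * y.val - L + 1) * (π / N) : ℝ) : ℂ) * Complex.I by push_cast; ring,
    Complex.exp_ofReal_mul_I_re]

theorem image_add_natCast_range_eq_univ [NeZero N] (a : ZMod N) :
    (range N).image (fun k : ℕ => a + (k : ZMod N)) = univ :=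
  eq_univ_of_forall fun x =>
    mem_image.2 ⟨(x - a).val, mem_range.2 (x - a).val_lt, by simp⟩

theorem injOn_add_natCast_range (a : ZMod N) {l : ℕ} (hl : l ≤ N) :
    Set.InjOn (fun k : ℕ => a + (k : ZMod N)) (range l) := by
  intro j hj k hk hjk
  have hjk' := congrArg ZMod.val (add_left_cancel hjk)
  rwa [val_cast_of_lt ((mem_range.1 hj).trans_le hl),
    val_cast_of_lt ((mem_range.1 hk).trans_le hl)] at hjk'

theorem card_image_add_natCast_range [NeZero N] (a : ZMod N) {l : ℕ} (hl : l ≤ N) :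
    #((range l).image fun k : ℕ => a + (k : ZMod N)) = l := by
  rw [card_image_of_injOn (injOn_add_natCast_range a hl), card_range]

theorem IsIntervalZMod.exists_eq_image_range_le [NeZero N] {I : Finset (ZMod N)}
    (hI : IsIntervalZMod I) :
    ∃ a : ZMod N, ∃ l ≤ N, I = (range l).image fun k : ℕ => a + (k : ZMod N) := by
  obtain ⟨a, l, rfl⟩ := hI
  rcases le_total l N with hl | hl
  · exact ⟨a, l, hl, rfl⟩
  · refine ⟨a, N, le_rfl, ?_⟩
    rw [image_add_natCast_range_eq_univ a, ← univ_subset_iff,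
      ← image_add_natCast_range_eq_univ a]
    exact image_subset_image (range_subset_range.2 hl)

theorem IsIntervalZMod.norm_sum_stdAddChar_mul_le [NeZero N] {I : Finset (ZMod N)}
    (hI : IsIntervalZMod I) {n : ZMod N} (hn : n ≠ 0) :
    ‖∑ x ∈ I, stdAddChar (n * x)‖ ≤ N / (2 * n.valMinAbs.natAbs) := by
  obtain ⟨b, l, hl, rfl⟩ := hI.exists_eq_image_range_le
  rw [sum_image (injOn_add_natCast_range b hl)]
  have hterm (k : ℕ) :
      stdAddChar (n * (b + (k : ZMod N))) = stdAddChar (n * b) * stdAddChar n ^ k := by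
    rw [mul_add, AddChar.map_add_eq_mul, ← AddChar.map_nsmul_eq_pow, nsmul_eq_mul,
      mul_comm (k : ZMod N) n]
  simp only [hterm, ← mul_sum, norm_mul, norm_stdAddChar, one_mul]
  exact norm_sum_range_stdAddChar_pow_le hn l

theorem exists_isIntervalZMod_nDiamZMod_eq [NeZero N] (n : ZMod N) (B : Finset (ZMod N)) :
    ∃ I, IsIntervalZMod I ∧ n • B ⊆ I ∧ nDiamZMod n B = #I / N := by
  set S := {x : ℝ | ∃ I : Finset (ZMod N), IsIntervalZMod I ∧ n • B ⊆ I ∧ x = #I / N}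
  have hne : S.Nonempty :=
    ⟨_, univ, ⟨0, N, (image_add_natCast_range_eq_univ 0).symm⟩, subset_univ _, rfl⟩
  have hfin : S.Finite := (Set.finite_range fun I : Finset (ZMod N) => (#I / N : ℝ)).subset
    fun _ ⟨I, _, _, hx⟩ => ⟨I, hx.symm⟩
  exact hne.csInf_mem hfin

theorem card_biUnion_sub_le {p : ℕ} [Fact p.Prime] {ι : Type*} (s : Finset ι)
    {t : ι → Finset (ZMod p)} (ht : ∀ i ∈ s, IsIntervalZMod (t i))
    {n : ZMod p} (hn : n ≠ 0)
    {a : ZMod p} {L : ℕ} (hL : 2 * L ≤ p)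
    (hsub : n • s.biUnion t ⊆ (range L).image fun k : ℕ => a + (k : ZMod p)) :
    #(s.biUnion t) - (1 - 2 / π) * L ≤ #s * (p / (2 * n.valMinAbs.natAbs)) := by
  set B := s.biUnion t
  set θ := π / p
  set k : ZMod p → ℕ := fun x => (n * x - a).val
  have hp : (0 : ℝ) < p := by exact_mod_cast (Fact.out : p.Prime).pos
  have hθ : 0 < θ := by positivity
  have hLθ : L * θ ≤ π / 2 := by
    rw [show L * θ = π * L / p by ring, div_le_div_iff₀ hp two_pos]
    have : (2 * L : ℝ) ≤ p := by exact_mod_cast hL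
    nlinarith [pi_pos]
  have hk : ∀ x ∈ B, k x < L := by
    intro x hx
    obtain ⟨j, hj, hjx⟩ := mem_image.1 (hsub (smul_mem_smul_finset hx))
    have hj' : j < L := mem_range.1 hj
    have hxj : n * x - a = (j : ZMod p) := by rw [← smul_eq_mul, ← hjx]; ring
    change (n * x - a).val < L
    rwa [hxj, val_cast_of_lt (hj'.trans_le (by omega))]
  have hkinj : Set.InjOn k B := fun x _ y _ hxy =>
    mul_left_cancel₀ hn (sub_left_inj.1 (val_injective p hxy))
  set c := Complex.exp (((-((L - 1) * θ) : ℝ) : ℂ) * Complex.I) * stdAddChar (-a)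
  have hc : ‖c‖ = 1 := by rw [norm_mul, Complex.norm_exp_ofReal_mul_I, norm_stdAddChar, one_mul]
  have hre (x : ZMod p) : cos ((2 * k x - L + 1) * θ) = (c * stdAddChar (n * x)).re := by
    rw [mul_assoc, ← AddChar.map_add_eq_mul, neg_add_eq_sub, re_exp_mul_stdAddChar]
  calc #B - (1 - 2 / π) * L = #(B.image k) - (1 - 2 / π) * L := by
        rw [card_image_of_injOn hkinj]
    _ ≤ ∑ j ∈ B.image k, cos ((2 * j - L + 1) * θ) :=
        card_sub_le_sum_cos hθ hLθ fun j hj => by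
          obtain ⟨x, hx, rfl⟩ := mem_image.1 hj
          exact mem_range.2 (hk x hx)
    _ = ∑ x ∈ B, cos ((2 * k x - L + 1) * θ) := sum_image hkinj
    _ ≤ ∑ i ∈ s, ∑ x ∈ t i, cos ((2 * k x - L + 1) * θ) :=
        sum_biUnion_le_sum_sum s t fun x hx =>
          cos_two_mul_sub_add_one_mul_nonneg hθ.le hLθ (hk x hx)
    _ = ∑ i ∈ s, (c * ∑ x ∈ t i, stdAddChar (n * x)).re := by
        simp only [hre, mul_sum, Complex.re_sum]
    _ ≤ ∑ i ∈ s, (p / (2 * n.valMinAbs.natAbs) : ℝ) := sum_le_sum fun i hi =>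
        (Complex.re_le_norm _).trans <| by
          rw [norm_mul, hc, one_mul]; exact (ht i hi).norm_sum_stdAddChar_mul_le hn
    _ = #s * (p / (2 * n.valMinAbs.natAbs)) := by rw [sum_const, nsmul_eq_mul]

theorem stmt_7_general (p : ℕ) (hp : p.Prime) (m : ℕ) (B : Finset (ZMod p))
    (f : Fin m → Finset (ZMod p)) (hf : ∀ i, IsIntervalZMod (f i))
    (hB : B = Finset.univ.biUnion f)
    (β : ℝ) (hβ : β = (B.card : ℝ) / p)
    (n : ZMod p)
    (hD : nDiamZMod n B < min (1 / 2) (β / (1 - 2 / Real.pi))) :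
    (n.valMinAbs.natAbs : ℝ) ≤ m / (2 * (β - (1 - 2 / Real.pi) * nDiamZMod n B)) := by
  have := Fact.mk hp
  have hp0 : (0 : ℝ) < p := by exact_mod_cast hp.pos
  have hc : 0 < 1 - 2 / π := by
    rw [sub_pos, div_lt_one pi_pos]; linarith [pi_gt_three]
  rw [lt_min_iff, lt_div_iff₀ hc] at hD
  have hgap : 0 < β - (1 - 2 / π) * nDiamZMod n B := by linarith [hD.2]
  rcases eq_or_ne n 0 with rfl | hn
  · simpa using div_nonneg m.cast_nonneg (by linarith)
  obtain ⟨I, hI, hBI, hDI⟩ := exists_isIntervalZMod_nDiamZMod_eq n B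
  obtain ⟨a, L, hLp, rfl⟩ := hI.exists_eq_image_range_le
  rw [card_image_add_natCast_range a hLp] at hDI
  have hL : 2 * L ≤ p := by
    have : (2 * L : ℝ) < p := by rw [hDI, div_lt_iff₀ hp0] at hD; linarith [hD.1]
    exact_mod_cast this.le
  subst hB
  have key := card_biUnion_sub_le univ (fun i _ => hf i) hn hL hBI
  have hq : (0 : ℝ) < n.valMinAbs.natAbs := by exact_mod_cast natAbs_valMinAbs_pos hn
  rw [card_univ, Fintype.card_fin] at key
  rw [le_div_iff₀ (by linarith), hβ, hDI]
  calc (n.valMinAbs.natAbs : ℝ) * (2 * (#(univ.biUnion f) / p - (1 - 2 / π) * (L / p)))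
      = 2 * n.valMinAbs.natAbs / p * (#(univ.biUnion f) - (1 - 2 / π) * L) := by ring
    _ ≤ 2 * n.valMinAbs.natAbs / p * (m * (p / (2 * n.valMinAbs.natAbs))) := by gcongr
    _ = m := by field_simp

theorem stmt_7 (p : ℕ) (hp : p.Prime) (m : ℕ) (B : Finset (ZMod p))
    (f : Fin m → Finset (ZMod p)) (hf : ∀ i, IsIntervalZMod (f i))
    (hB : B = Finset.univ.biUnion f)
    (β : ℝ) (hβ : β = (B.card : ℝ) / p) (hβ0 : 0 < β)
    (n : ZMod p)
    (hD : nDiamZMod n B < min (1 / 2) (β / (1 - 2 / Real.pi))) :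
    (n.valMinAbs.natAbs : ℝ) ≤ m / (2 * (β - (1 - 2 / Real.pi) * nDiamZMod n B)) :=
  stmt_7_general p hp m B f hf hB β hβ n hD
end
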